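/- Fix ℏ > 0 and let ψ, φ : ℝ → ℂ be Schwartz functions that are orthogonal in L²(ℝ), i.e., ∫_ℝ conj(ψ(x)) φ(x) dx = 0. Then their Wigner functions are orthogonal in phase space: ∫_ℝ ∫_ℝ W_ψ(q, p) W_φ(q, p) dq dp = 0. -/

import Mathlib

/-!
Put `K_f(q, s) = conj f(q + ℏs/2) · f(q − ℏs/2)`. For fixed `q`, `p ↦ W_f(q, p)` is a rescaled
Fourier transform of `K_f(q, ·)`, so Parseval in `p` turns `∫∫ W_ψ W_φ` into a multiple of
`∫∫ K_ψ(q, s) K_φ(q, −s) ds dq = ∫∫ (conj ψ · φ)(q + ℏs/2) (conj φ · ψ)(q − ℏs/2) ds dq`.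
The linear change of variables `(q, s) ↦ (q + ℏs/2, q − ℏs/2)` factors this integral as
`ℏ⁻¹ ⟨ψ, φ⟩ ⟨φ, ψ⟩ = 0`.

Fubini is justified by the bounds `|K_f(q, s)|, |𝓕 K_f(q, ·)(ξ)| ≲ (1 + q²)⁻¹ (1 + ξ²)⁻¹`;
the one on the Fourier side comes from integrating by parts twice in `s`.
-/

open MeasureTheory

/-- The Wigner function of `ψ : ℝ → ℂ` (with Planck constant `h`):
`W_ψ(q,p) = (1/(2π)) ∫ conj(ψ(q + h s/2)) ψ(q − h s/2) e^{i p s} ds`. -/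
noncomputable def wigner (h : ℝ) (ψ : ℝ → ℂ) (q p : ℝ) : ℂ :=
  (1 / (2 * Real.pi) : ℂ) *
    ∫ s : ℝ, (starRingEnd ℂ) (ψ (q + h * s / 2)) * ψ (q - h * s / 2) *
      Complex.exp (Complex.I * (p : ℂ) * (s : ℂ))

open Asymptotics Filter FourierTransform Real
open scoped SchwartzMap

theorem one_add_sq_le_max_mul {x u v K : ℝ} (h : x ^ 2 ≤ K * (u ^ 2 + v ^ 2)) :
    1 + x ^ 2 ≤ max 1 K * ((1 + u ^ 2) * (1 + v ^ 2)) := by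
  have hK : K ≤ max 1 K := le_max_right 1 K
  have h1 : 1 ≤ max 1 K := le_max_left 1 K
  nlinarith [mul_le_mul_of_nonneg_right hK (by positivity : 0 ≤ u ^ 2 + v ^ 2),
    mul_nonneg (sq_nonneg u) (sq_nonneg v)]

theorem SchwartzMap.exists_norm_mul_one_add_sq_sq_le {E : Type*} [NormedAddCommGroup E]
    [NormedSpace ℝ E] (f : 𝓢(ℝ, E)) : ∃ C, ∀ x, ‖f x‖ * (1 + x ^ 2) ^ 2 ≤ C := by
  refine ⟨2 ^ 4 * (Finset.Iic (4, 0)).sup (fun m => SchwartzMap.seminorm ℝ m.1 m.2) f,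
    fun x => ?_⟩
  have hf := one_add_le_sup_seminorm_apply (𝕜 := ℝ) (m := (4, 0)) le_rfl le_rfl f x
  rw [norm_iteratedFDeriv_zero] at hf
  have hx : (1 + x ^ 2) ^ 2 ≤ (1 + ‖x‖) ^ 4 := by
    rw [show (4 : ℕ) = 2 * 2 from rfl, pow_mul]
    gcongr
    nlinarith [sq_abs x, abs_nonneg x, norm_eq_abs x]
  calc ‖f x‖ * (1 + x ^ 2) ^ 2 ≤ (1 + ‖x‖) ^ 4 * ‖f x‖ := by
        rw [mul_comm]; gcongr
    _ ≤ _ := hf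

theorem SchwartzMap.hasDerivAt_derivCLM {F : Type*} [NormedAddCommGroup F] [NormedSpace ℝ F]
    (f : 𝓢(ℝ, F)) (x : ℝ) : HasDerivAt f (SchwartzMap.derivCLM ℝ F f x) x := by
  rw [SchwartzMap.derivCLM_apply]; exact f.hasDerivAt x

theorem SchwartzMap.integrable_conj_mul (f g : 𝓢(ℝ, ℂ)) :
    Integrable fun x => (starRingEnd ℂ) (f x) * g x :=
  g.integrable.bdd_mul (by fun_prop) (.of_forall fun x => by
    rw [Complex.norm_conj]; exact f.norm_le_seminorm ℝ x)

section Slices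

variable {F : ℝ × ℝ → ℂ} (hF : F =O[⊤] fun z => (1 + z.1 ^ 2)⁻¹ * (1 + z.2 ^ 2)⁻¹)
include hF

theorem integrable_slice_of_isBigO {q : ℝ} (hm : AEStronglyMeasurable fun s => F (q, s)) :
    Integrable fun s => F (q, s) := by
  have hq : (fun s => F (q, s)) =O[⊤] fun s => (1 + q ^ 2)⁻¹ * (1 + s ^ 2)⁻¹ :=
    hF.comp_tendsto (k := fun s => (q, s)) tendsto_top
  exact hq.integrable hm (integrable_inv_one_add_sq.const_mul _)

theorem isBigO_integral_norm_slice :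
    (fun q => ∫ s, ‖F (q, s)‖) =O[⊤] fun q => (1 + q ^ 2)⁻¹ := by
  obtain ⟨C, hC⟩ := isBigO_top.1 hF
  refine isBigO_top.2 ⟨C * π, fun q => ?_⟩
  have hw : ∀ x : ℝ, ‖(1 + x ^ 2)⁻¹‖ = (1 + x ^ 2)⁻¹ := fun x => norm_of_nonneg (by positivity)
  have hbound : ∫ s, ‖F (q, s)‖ ≤ ∫ s, C * (1 + q ^ 2)⁻¹ * (1 + s ^ 2)⁻¹ := by
    refine integral_mono_of_nonneg (.of_forall fun s => norm_nonneg _)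
      (integrable_inv_one_add_sq.const_mul _) (.of_forall fun s => ?_)
    simpa only [norm_mul, hw, mul_assoc] using hC (q, s)
  rw [integral_const_mul, integral_univ_inv_one_add_sq] at hbound
  rw [norm_of_nonneg (integral_nonneg fun s => norm_nonneg _), hw]
  linarith

end Slices

section Fourier

variable {E : Type*} [NormedAddCommGroup E] [NormedSpace ℂ E]

theorem fourier_eq_smul_fourier_of_hasDerivAt {u u' : ℝ → E} (hu : ∀ x, HasDerivAt u (u' x) x)
    (hi : Integrable u) (hi' : Integrable u') (ξ : ℝ) :
    𝓕 u' ξ = (2 * π * Complex.I * ξ) • 𝓕 u ξ := by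
  have hderiv : deriv u = u' := funext fun x => (hu x).deriv
  have := Real.fourier_deriv hi (fun x => (hu x).differentiableAt) (hderiv ▸ hi')
  rw [hderiv] at this
  exact congrFun this ξ

theorem norm_fourier_mul_one_add_sq_le {u u' u'' : ℝ → E} (hu : ∀ x, HasDerivAt u (u' x) x)
    (hu' : ∀ x, HasDerivAt u' (u'' x) x) (hi : Integrable u) (hi' : Integrable u')
    (hi'' : Integrable u'') (ξ : ℝ) :
    ‖𝓕 u ξ‖ * (1 + ξ ^ 2) ≤ (∫ x, ‖u x‖) + ∫ x, ‖u'' x‖ := by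
  have h2 : ‖𝓕 u'' ξ‖ = (2 * π) ^ 2 * ξ ^ 2 * ‖𝓕 u ξ‖ := by
    rw [fourier_eq_smul_fourier_of_hasDerivAt hu' hi' hi'',
      fourier_eq_smul_fourier_of_hasDerivAt hu hi hi']
    simp only [norm_smul, norm_mul, Complex.norm_real, Complex.norm_ofNat, Complex.norm_I,
      norm_eq_abs, abs_of_pos pi_pos]
    rw [← sq_abs ξ]; ring
  have hπ : 1 ≤ (2 * π) ^ 2 := one_le_pow₀ (by linarith [pi_gt_three])
  have h0 : ‖𝓕 u ξ‖ ≤ ∫ x, ‖u x‖ := VectorFourier.norm_fourierIntegral_le_integral_norm ..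
  have h0'' : ‖𝓕 u'' ξ‖ ≤ ∫ x, ‖u'' x‖ := VectorFourier.norm_fourierIntegral_le_integral_norm ..
  nlinarith [mul_nonneg (sq_nonneg ξ) (norm_nonneg (𝓕 u ξ))]

theorem continuous_fourier {u : ℝ → E} (hu : Integrable u) : Continuous (𝓕 u) :=
  VectorFourier.fourierIntegral_continuous Real.continuous_fourierChar
    (by exact continuous_inner) hu

end Fourier

theorem integral_fourier_mul_fourier {U V : ℝ → ℂ} (hU : Integrable U) (hV : Integrable V)
    (hVc : Continuous V) (hFV : Integrable (𝓕 V)) :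
    ∫ ξ, 𝓕 U ξ * 𝓕 V ξ = ∫ s, U s * V (-s) := by
  have hflip : (innerₗ ℝ).flip = innerₗ ℝ :=
    LinearMap.ext₂ fun x y => real_inner_comm x y
  have h := VectorFourier.integral_fourierIntegral_smul_eq_flip (μ := volume) (ν := volume)
    (L := innerₗ ℝ) Real.continuous_fourierChar (by exact continuous_inner) hU hFV
  rw [hflip] at h
  simp only [smul_eq_mul] at h
  refine h.trans (integral_congr_ae (.of_forall fun s => ?_))
  change U s * 𝓕 (𝓕 V) s = U s * V (-s)
  rw [← neg_neg s, ← Real.fourierInv_eq_fourier_neg, hVc.fourierInv_fourier_eq hV hFV, neg_neg]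

theorem integral_integral_mul_comp_add_mul_sub_mul {𝕜 : Type*} [RCLike 𝕜] {G H : ℝ → 𝕜}
    (hG : Integrable G) (hH : Integrable H) {c : ℝ} (hc : c ≠ 0) :
    ∫ q, ∫ s, G (q + c * s) * H (q - c * s) = |2 * c|⁻¹ * ((∫ x, G x) * ∫ x, H x) := by
  let L : ℝ × ℝ →ₗ[ℝ] ℝ × ℝ :=
    (LinearMap.fst ℝ ℝ ℝ + c • LinearMap.snd ℝ ℝ ℝ).prod
      (LinearMap.fst ℝ ℝ ℝ - c • LinearMap.snd ℝ ℝ ℝ)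
  have hdet : LinearMap.det L = -(2 * c) := by
    rw [← LinearMap.det_toMatrix (Module.Basis.finTwoProd ℝ), Matrix.det_fin_two]
    simp [L, LinearMap.toMatrix_apply]
    ring
  have hmap : Measure.map L volume = ENNReal.ofReal |(2 * c)⁻¹| • (volume : Measure (ℝ × ℝ)) := by
    rw [Measure.map_linearMap_addHaar_eq_smul_addHaar _ (by simp [hdet, hc]), hdet, inv_neg,
      abs_neg]
  have hL : AEMeasurable L volume := (LinearMap.continuous_of_finiteDimensional L).aemeasurable
  have hGH : Integrable (fun z : ℝ × ℝ => G z.1 * H z.2) (volume.prod volume) :=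
    hG.mul_prod hH
  have hGH' : Integrable (fun z : ℝ × ℝ => G z.1 * H z.2) (Measure.map L volume) := by
    rw [hmap, Measure.volume_eq_prod]; exact hGH.smul_measure ENNReal.ofReal_ne_top
  have hcomp : Integrable (fun z : ℝ × ℝ => G (z.1 + c * z.2) * H (z.1 - c * z.2))
      (volume.prod volume) :=
    (integrable_map_measure hGH'.aestronglyMeasurable hL).1 hGH'
  rw [← integral_prod _ hcomp]
  calc ∫ z : ℝ × ℝ, G (z.1 + c * z.2) * H (z.1 - c * z.2) ∂volume.prod volume
      = ∫ z, G z.1 * H z.2 ∂Measure.map L volume :=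
        (integral_map hL hGH'.aestronglyMeasurable).symm
    _ = |2 * c|⁻¹ * ((∫ x, G x) * ∫ x, H x) := by
        rw [hmap, integral_smul_measure, Measure.volume_eq_prod, integral_prod_mul,
          ENNReal.toReal_ofReal (abs_nonneg _), abs_inv, RCLike.real_smul_eq_coe_mul]

def wignerKernel (c : ℝ) (f g : ℝ → ℂ) (q s : ℝ) : ℂ :=
  (starRingEnd ℂ) (f (q + c * s)) * g (q - c * s)

theorem continuous_wignerKernel (c : ℝ) {f g : ℝ → ℂ} (hf : Continuous f) (hg : Continuous g)
    (q : ℝ) : Continuous (wignerKernel c f g q) := by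
  unfold wignerKernel; fun_prop

theorem hasDerivAt_wignerKernel (c : ℝ) {f g f' g' : ℝ → ℂ} (hf : ∀ x, HasDerivAt f (f' x) x)
    (hg : ∀ x, HasDerivAt g (g' x) x) (q s : ℝ) :
    HasDerivAt (wignerKernel c f g q)
      (c * wignerKernel c f' g q s - c * wignerKernel c f g' q s) s := by
  have hu := (hf (q + c * s)).scomp s (((hasDerivAt_id s).const_mul c).const_add q)
  have hv := (hg (q - c * s)).scomp s (((hasDerivAt_id s).const_mul c).const_sub q)
  refine (hu.star.mul hv).congr_deriv ?_
  simp only [wignerKernel, Function.comp_apply, id, mul_one, Complex.star_def, Complex.real_smul,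
    map_mul, Complex.conj_ofReal, neg_mul, Complex.ofReal_neg]
  ring

theorem one_add_sq_mul_one_add_sq_le {c : ℝ} (hc : c ≠ 0) (q s : ℝ) :
    (1 + q ^ 2) * (1 + s ^ 2) ≤
      max 1 (c⁻¹ ^ 2) * ((1 + (q + c * s) ^ 2) ^ 2 * (1 + (q - c * s) ^ 2) ^ 2) := by
  have hq := one_add_sq_le_max_mul (x := q) (u := q + c * s) (v := q - c * s) (K := 1) (by
    nlinarith [sq_nonneg (c * s)])
  have hs := one_add_sq_le_max_mul (x := s) (u := q + c * s) (v := q - c * s) (K := c⁻¹ ^ 2) (by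
    have : c⁻¹ ^ 2 * ((q + c * s) ^ 2 + (q - c * s) ^ 2) = 2 * s ^ 2 + 2 * (c⁻¹ * q) ^ 2 := by
      field_simp; ring
    nlinarith [sq_nonneg (c⁻¹ * q)])
  rw [max_self] at hq
  calc (1 + q ^ 2) * (1 + s ^ 2)
      ≤ (1 * ((1 + (q + c * s) ^ 2) * (1 + (q - c * s) ^ 2))) *
          (max 1 (c⁻¹ ^ 2) * ((1 + (q + c * s) ^ 2) * (1 + (q - c * s) ^ 2))) := by
        gcongr
    _ = _ := by ring

theorem isBigO_wignerKernel {c : ℝ} (hc : c ≠ 0) (f g : 𝓢(ℝ, ℂ)) :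
    (fun z : ℝ × ℝ => wignerKernel c f g z.1 z.2) =O[⊤]
      fun z => (1 + z.1 ^ 2)⁻¹ * (1 + z.2 ^ 2)⁻¹ := by
  obtain ⟨A, hA⟩ := f.exists_norm_mul_one_add_sq_sq_le
  obtain ⟨B, hB⟩ := g.exists_norm_mul_one_add_sq_sq_le
  set M := max 1 (c⁻¹ ^ 2)
  refine isBigO_top.2 ⟨M * (A * B), fun ⟨q, s⟩ => ?_⟩
  set u := q + c * s
  set v := q - c * s
  have hK : ‖wignerKernel c f g q s‖ * ((1 + u ^ 2) ^ 2 * (1 + v ^ 2) ^ 2) ≤ A * B := by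
    rw [wignerKernel, norm_mul, Complex.norm_conj, mul_mul_mul_comm]
    exact mul_le_mul (hA u) (hB v) (by positivity) ((by positivity : (0 : ℝ) ≤ _).trans (hA u))
  have hw : ‖wignerKernel c f g q s‖ * ((1 + q ^ 2) * (1 + s ^ 2)) ≤ M * (A * B) :=
    calc ‖wignerKernel c f g q s‖ * ((1 + q ^ 2) * (1 + s ^ 2))
        ≤ ‖wignerKernel c f g q s‖ * (M * ((1 + u ^ 2) ^ 2 * (1 + v ^ 2) ^ 2)) := by
          gcongr ?_ * ?_; exact one_add_sq_mul_one_add_sq_le hc q s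
      _ ≤ M * (A * B) := by
          rw [mul_left_comm]; gcongr
  rw [norm_mul, norm_inv, norm_inv, norm_of_nonneg (by positivity : (0 : ℝ) ≤ 1 + q ^ 2),
    norm_of_nonneg (by positivity : (0 : ℝ) ≤ 1 + s ^ 2), ← mul_inv, ← div_eq_mul_inv,
    le_div_iff₀ (by positivity)]
  exact hw

theorem integrable_wignerKernel {c : ℝ} (hc : c ≠ 0) (f g : 𝓢(ℝ, ℂ)) (q : ℝ) :
    Integrable (wignerKernel c f g q) :=
  integrable_slice_of_isBigO (isBigO_wignerKernel hc f g)
    (continuous_wignerKernel c f.continuous g.continuous q).aestronglyMeasurable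

theorem isBigO_fourier_wignerKernel {c : ℝ} (hc : c ≠ 0) (f g : 𝓢(ℝ, ℂ)) :
    (fun z : ℝ × ℝ => 𝓕 (wignerKernel c f g z.1) z.2) =O[⊤]
      fun z => (1 + z.1 ^ 2)⁻¹ * (1 + z.2 ^ 2)⁻¹ := by
  set D := SchwartzMap.derivCLM ℝ ℂ
  set K := fun (f g : 𝓢(ℝ, ℂ)) => wignerKernel c f g
  have hD (f : 𝓢(ℝ, ℂ)) := f.hasDerivAt_derivCLM
  let u' (q s : ℝ) : ℂ := c * K (D f) g q s - c * K f (D g) q s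
  let u'' (q s : ℝ) : ℂ := c * (c * K (D (D f)) g q s - c * K (D f) (D g) q s) -
    c * (c * K (D f) (D g) q s - c * K f (D (D g)) q s)
  have hu' (q s : ℝ) : HasDerivAt (K f g q) (u' q s) s :=
    hasDerivAt_wignerKernel c (hD f) (hD g) q s
  have hu'' (q s : ℝ) : HasDerivAt (u' q) (u'' q s) s :=
    ((hasDerivAt_wignerKernel c (hD (D f)) (hD g) q s).const_mul _).sub
      ((hasDerivAt_wignerKernel c (hD f) (hD (D g)) q s).const_mul _)
  have hK (f g : 𝓢(ℝ, ℂ)) := isBigO_wignerKernel hc f g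
  have hI (f g : 𝓢(ℝ, ℂ)) := integrable_wignerKernel hc f g
  have hu'_int (q : ℝ) : Integrable (u' q) :=
    ((hI _ _ q).const_mul _).sub ((hI _ _ q).const_mul _)
  have hu''_int (q : ℝ) : Integrable (u'' q) :=
    ((((hI _ _ q).const_mul _).sub ((hI _ _ q).const_mul _)).const_mul _).sub
      ((((hI _ _ q).const_mul _).sub ((hI _ _ q).const_mul _)).const_mul _)
  have hu''_isBigO : (fun z : ℝ × ℝ => u'' z.1 z.2) =O[⊤]
      fun z => (1 + z.1 ^ 2)⁻¹ * (1 + z.2 ^ 2)⁻¹ :=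
    ((((hK _ _).const_mul_left _).sub ((hK _ _).const_mul_left _)).const_mul_left _).sub
      ((((hK _ _).const_mul_left _).sub ((hK _ _).const_mul_left _)).const_mul_left _)
  obtain ⟨C, hC⟩ := isBigO_top.1 ((isBigO_integral_norm_slice (hK f g)).add
    (isBigO_integral_norm_slice hu''_isBigO))
  refine isBigO_top.2 ⟨C, fun ⟨q, ξ⟩ => ?_⟩
  have h := norm_fourier_mul_one_add_sq_le (hu' q) (hu'' q) (hI f g q) (hu'_int q) (hu''_int q) ξ
  have hCq := (le_norm_self _).trans (hC q)
  rw [norm_mul, norm_inv, norm_inv, norm_of_nonneg (by positivity : (0 : ℝ) ≤ 1 + q ^ 2),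
    norm_of_nonneg (by positivity : (0 : ℝ) ≤ 1 + ξ ^ 2)] at *
  rw [← mul_assoc, ← div_eq_mul_inv, le_div_iff₀ (by positivity)]
  exact h.trans hCq

theorem wignerKernel_mul_wignerKernel_neg (c : ℝ) (f g : ℝ → ℂ) (q s : ℝ) :
    wignerKernel c f f q s * wignerKernel c g g q (-s) =
      (starRingEnd ℂ) (f (q + c * s)) * g (q + c * s) *
        ((starRingEnd ℂ) (g (q - c * s)) * f (q - c * s)) := by
  simp only [wignerKernel, mul_neg, sub_neg_eq_add, ← sub_eq_add_neg]
  ring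

-- Mathlib's `𝓕` integrates against `e^{-2πixξ}`, whence the frequency `p / -(2π)`.
theorem wigner_eq_fourier_wignerKernel (h : ℝ) (f : ℝ → ℂ) (q p : ℝ) :
    wigner h f q p = (1 / (2 * π) : ℂ) * 𝓕 (wignerKernel (h / 2) f f q) (p / -(2 * π)) := by
  rw [wigner, Real.fourier_real_eq_integral_exp_smul]
  congr 1
  refine integral_congr_ae (.of_forall fun s => ?_)
  have hp : -2 * π * s * (p / -(2 * π)) = p * s := by field_simp
  dsimp only
  rw [hp, smul_eq_mul, mul_comm, wignerKernel]
  push_cast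
  ring_nf

theorem stronglyMeasurable_wigner (h : ℝ) {f : ℝ → ℂ} (hf : Continuous f) :
    StronglyMeasurable fun z : ℝ × ℝ => wigner h f z.1 z.2 := by
  unfold wigner
  refine stronglyMeasurable_const.mul ?_
  have hF : Continuous fun w : (ℝ × ℝ) × ℝ => (starRingEnd ℂ) (f (w.1.1 + h * w.2 / 2)) *
      f (w.1.1 - h * w.2 / 2) * Complex.exp (Complex.I * w.1.2 * w.2) := by fun_prop
  exact hF.stronglyMeasurable.integral_prod_right'

theorem isBigO_wigner {h : ℝ} (hh : h ≠ 0) (f : 𝓢(ℝ, ℂ)) :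
    (fun z : ℝ × ℝ => wigner h f z.1 z.2) =O[⊤]
      fun z => (1 + z.1 ^ 2)⁻¹ * (1 + (z.2 / -(2 * π)) ^ 2)⁻¹ := by
  have hF := (isBigO_fourier_wignerKernel (div_ne_zero hh two_ne_zero) f f).comp_tendsto
    (k := fun z : ℝ × ℝ => (z.1, z.2 / -(2 * π))) (tendsto_top (l := ⊤))
  exact (hF.const_mul_left (1 / (2 * π) : ℂ)).congr_left fun z =>
    (wigner_eq_fourier_wignerKernel h f z.1 z.2).symm

theorem integrable_wigner_mul_wigner {h : ℝ} (hh : h ≠ 0) (f g : 𝓢(ℝ, ℂ)) :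
    Integrable (fun z : ℝ × ℝ => wigner h f z.1 z.2 * wigner h g z.1 z.2)
      (volume.prod volume) := by
  have hR : -(2 * π) ≠ 0 := by simp [pi_ne_zero]
  have hw : (fun z : ℝ × ℝ => (1 + z.1 ^ 2)⁻¹ * (1 + (z.2 / -(2 * π)) ^ 2)⁻¹) =O[⊤]
      fun _ => (1 : ℝ) := by
    refine isBigO_top.2 ⟨1, fun z => ?_⟩
    rw [norm_one, mul_one, norm_of_nonneg (by positivity)]
    exact mul_le_one₀ (inv_le_one_of_one_le₀ (by nlinarith [sq_nonneg z.1])) (by positivity)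
      (inv_le_one_of_one_le₀ (by nlinarith [sq_nonneg (z.2 / -(2 * π))]))
  refine ((isBigO_wigner hh f).mul ((isBigO_wigner hh g).trans hw)).integrable
    ((stronglyMeasurable_wigner h f.continuous).mul
      (stronglyMeasurable_wigner h g.continuous)).aestronglyMeasurable ?_
  simpa only [mul_one] using
    integrable_inv_one_add_sq.mul_prod (integrable_inv_one_add_sq.comp_div hR)

theorem integral_wigner_mul_wigner {h : ℝ} (hh : h ≠ 0) (f g : 𝓢(ℝ, ℂ)) (q : ℝ) :
    ∫ p, wigner h f q p * wigner h g q p =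
      (1 / (2 * π) : ℂ) *
        ∫ s, wignerKernel (h / 2) f f q s * wignerKernel (h / 2) g g q (-s) := by
  have hc := div_ne_zero hh two_ne_zero
  have hFV : Integrable (𝓕 (wignerKernel (h / 2) g g q)) :=
    integrable_slice_of_isBigO (isBigO_fourier_wignerKernel hc g g)
      (continuous_fourier (integrable_wignerKernel hc g g q)).aestronglyMeasurable
  simp_rw [wigner_eq_fourier_wignerKernel, mul_mul_mul_comm]
  rw [integral_const_mul, Measure.integral_comp_div
    (fun ξ => 𝓕 (wignerKernel (h / 2) f f q) ξ * 𝓕 (wignerKernel (h / 2) g g q) ξ),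
    integral_fourier_mul_fourier (integrable_wignerKernel hc f f q)
      (integrable_wignerKernel hc g g q) (continuous_wignerKernel _ g.continuous g.continuous q)
      hFV, abs_neg, abs_of_pos two_pi_pos, Complex.real_smul]
  have : (π : ℂ) ≠ 0 := Complex.ofReal_ne_zero.2 pi_ne_zero
  field_simp
  push_cast
  ring

/-- For `ℏ > 0` and Schwartz functions `ψ, φ` that are orthogonal in `L²(ℝ)`
(`∫ conj(ψ(x)) φ(x) dx = 0`), their Wigner functions are orthogonal in phase space:
`∫∫ W_ψ(q,p) W_φ(q,p) dq dp = 0`. -/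
theorem stmt_18 (ℏ : ℝ) (hℏ : 0 < ℏ) (ψ φ : SchwartzMap ℝ ℂ)
    (horth : ∫ x : ℝ, (starRingEnd ℂ) (ψ x) * φ x = 0) :
    ∫ p : ℝ, ∫ q : ℝ, wigner ℏ ψ q p * wigner ℏ φ q p = 0 := by
  rw [integral_integral_swap (f := fun p q => wigner ℏ ψ q p * wigner ℏ φ q p)
    (integrable_wigner_mul_wigner hℏ.ne' ψ φ).swap]
  simp_rw [integral_wigner_mul_wigner hℏ.ne', integral_const_mul,
    wignerKernel_mul_wignerKernel_neg]
  rw [integral_integral_mul_comp_add_mul_sub_mul (ψ.integrable_conj_mul φ)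
    (φ.integrable_conj_mul ψ) (div_ne_zero hℏ.ne' two_ne_zero), horth]
  simp
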